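/- Let (G_i, S) be a sequence of marked groups all satisfying the Rapid Decay property with a common polynomial P, converging to (G,S) in the space of marked groups (i.e., for every R there is i_0 such that balls of radius R in Cayley graphs of G_i and G agree for i ≥ i_0). Then ρ(G_i,S) → ρ(G,S). -/

import Mathlib

open Filter

variable {α : Type*} [Fintype α] [DecidableEq α]

/-- A marked group on the symmetric alphabet `α ⊔ α⁻¹` is a (normal) subgroup
`N ≤ F(α)`; `wordRetProb N n` is the return probability at time `n` of the simple
random walk on the quotient `F(α)/N`, i.e. the proportion of words of length `n` over
`α ⊔ α⁻¹` lying in `N`. -/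
noncomputable def wordRetProb (N : Subgroup (FreeGroup α)) (n : ℕ) : ℝ :=
  (Nat.card {w : Fin n → α × Bool // FreeGroup.mk (List.ofFn w) ∈ N} : ℝ) /
    ((2 * Fintype.card α : ℕ) : ℝ) ^ n

/-- The spectral radius of the simple random walk on the marked group `F(α)/N`. -/
noncomputable def wordSpectralRadius (N : Subgroup (FreeGroup α)) : ℝ :=
  limsup (fun n : ℕ => wordRetProb N n ^ ((n : ℝ)⁻¹)) atTop

/-- Word length on the quotient `F(α)/N` with respect to the images of `α ⊔ α⁻¹`. -/
noncomputable def quotLength (N : Subgroup (FreeGroup α)) (x : FreeGroup α ⧸ N) : ℕ :=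
  sInf {n | ∃ w : List (α × Bool), w.length = n ∧
    (QuotientGroup.mk (FreeGroup.mk w) : FreeGroup α ⧸ N) = x}

section RD

variable {G : Type*} [Group G]

/-- The `ℓ²`-norm of a finitely supported function. -/
noncomputable def l2Norm (f : G →₀ ℝ) : ℝ :=
  Real.sqrt (∑ x ∈ f.support, (f x) ^ 2)

/-- Convolution of finitely supported functions. -/
noncomputable def conv (f u : G →₀ ℝ) : G →₀ ℝ :=
  f.sum fun g a => a • Finsupp.mapDomain (fun x => g * x) u

/-- Norm of `f` as a convolution operator on `ℓ²` (on the dense subspace of finitely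
supported functions). -/
noncomputable def opNorm (f : G →₀ ℝ) : ℝ :=
  sSup {c | ∃ u : G →₀ ℝ, l2Norm u ≤ 1 ∧ c = l2Norm (conv f u)}

/-- Rapid Decay with polynomial `P`, with respect to a length function `len`. -/
def RapidDecayWith (len : G → ℕ) (P : Polynomial ℝ) : Prop :=
  ∀ (r : ℕ) (f : G →₀ ℝ), (∀ x ∈ f.support, len x ≤ r) →
    opNorm f ≤ P.eval (r : ℝ) * l2Norm f

end RD

/-! ### Auxiliary lemmas: `ℓ²` norm, convolution, operator norm -/

section L2Aux

variable {G : Type*} [Group G]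

omit [Group G] in
private theorem sum_sq_subset (f : G →₀ ℝ) {s : Finset G} (h : f.support ⊆ s) :
    ∑ x ∈ f.support, (f x)^2 = ∑ x ∈ s, (f x)^2 :=
  Finset.sum_subset h (by intro x _ hx; simp [Finsupp.notMem_support_iff.mp hx])

private noncomputable def toE (s : Finset G) (f : G →₀ ℝ) : EuclideanSpace ℝ s := WithLp.toLp 2 (fun i => f i)

omit [Group G] in
private theorem l2Norm_eq (f : G →₀ ℝ) {s : Finset G} (h : f.support ⊆ s) :
    l2Norm f = ‖toE s f‖ := by
  rw [l2Norm, EuclideanSpace.norm_eq, sum_sq_subset f h]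
  congr 1
  rw [← Finset.sum_coe_sort]
  congr 1
  ext i
  rw [Real.norm_eq_abs, sq_abs, toE]

omit [Group G] in
private theorem l2Norm_nonneg (f : G →₀ ℝ) : 0 ≤ l2Norm f := Real.sqrt_nonneg _

omit [Group G] in
private theorem l2Norm_zero : l2Norm (0 : G →₀ ℝ) = 0 := by simp [l2Norm]

omit [Group G] in
private theorem l2Norm_add_le (f g : G →₀ ℝ) : l2Norm (f + g) ≤ l2Norm f + l2Norm g := by
  classical
  set s := f.support ∪ g.support with hs
  have hf : f.support ⊆ s := Finset.subset_union_left
  have hg : g.support ⊆ s := Finset.subset_union_right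
  have hfg : (f + g).support ⊆ s := Finsupp.support_add
  rw [l2Norm_eq f hf, l2Norm_eq g hg, l2Norm_eq (f+g) hfg]
  have : toE s (f + g) = toE s f + toE s g := by
    ext i; simp [toE]
  rw [this]
  exact norm_add_le _ _

omit [Group G] in
private theorem l2Norm_sum_le {ι : Type*} (t : Finset ι) (F : ι → (G →₀ ℝ)) :
    l2Norm (∑ i ∈ t, F i) ≤ ∑ i ∈ t, l2Norm (F i) := by
  classical
  induction t using Finset.induction with
  | empty => simp [l2Norm_zero]
  | insert _ _ hx ih =>
    rw [Finset.sum_insert hx, Finset.sum_insert hx]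
    exact (l2Norm_add_le _ _).trans (by linarith)

omit [Group G] in
private theorem l2Norm_smul (a : ℝ) (f : G →₀ ℝ) : l2Norm (a • f) = |a| * l2Norm f := by
  classical
  have h : (a • f).support ⊆ f.support := Finsupp.support_smul
  rw [l2Norm, sum_sq_subset _ h, l2Norm]
  have : ∀ x, ((a • f) x)^2 = a^2 * (f x)^2 := by
    intro x; simp [Finsupp.smul_apply, smul_eq_mul]; ring
  simp_rw [this]
  rw [← Finset.mul_sum, Real.sqrt_mul (sq_nonneg a), Real.sqrt_sq_eq_abs]

omit [Group G] in
private theorem l2Norm_pos {f : G →₀ ℝ} (hf : f ≠ 0) : 0 < l2Norm f := by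
  rw [l2Norm, Real.sqrt_pos]
  obtain ⟨x, hx⟩ : ∃ x, f x ≠ 0 := by
    by_contra h
    push_neg at h
    exact hf (Finsupp.ext h)
  apply Finset.sum_pos' (fun y _ => sq_nonneg _)
  exact ⟨x, Finsupp.mem_support_iff.mpr hx, by positivity⟩

private theorem l2Norm_mapDomain (g : G) (f : G →₀ ℝ) :
    l2Norm (Finsupp.mapDomain (fun x => g * x) f) = l2Norm f := by
  classical
  have hinj : Function.Injective (fun x : G => g * x) := mul_right_injective g
  rw [l2Norm, l2Norm, Finsupp.mapDomain_support_of_injective hinj]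
  rw [Finset.sum_image (fun x _ y _ h => hinj h)]
  congr 1
  apply Finset.sum_congr rfl
  intro x _
  rw [Finsupp.mapDomain_apply hinj]

private theorem conv_eq_mul (f u : MonoidAlgebra ℝ G) : conv f.coeff u.coeff = (f * u).coeff := by
  rw [MonoidAlgebra.mul_def, conv]
  simp only [Finsupp.sum, MonoidAlgebra.coeff_sum, MonoidAlgebra.coeff_single]
  apply Finset.sum_congr rfl
  intro g _
  rw [Finsupp.mapDomain, Finsupp.smul_sum, Finsupp.sum]
  apply Finset.sum_congr rfl
  intro h _
  rw [Finsupp.smul_single, smul_eq_mul]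

private theorem conv_zero (f : G →₀ ℝ) : conv f 0 = 0 := by
  simp [conv]

private theorem l2Norm_conv_le_sum (f u : G →₀ ℝ) :
    l2Norm (conv f u) ≤ (∑ g ∈ f.support, |f g|) * l2Norm u := by
  rw [conv, Finsupp.sum]
  refine (l2Norm_sum_le _ _).trans ?_
  rw [Finset.sum_mul]
  apply Finset.sum_le_sum
  intro g _
  rw [l2Norm_smul, l2Norm_mapDomain]

private theorem bddAbove_opSet (f : G →₀ ℝ) :
    BddAbove {c | ∃ u : G →₀ ℝ, l2Norm u ≤ 1 ∧ c = l2Norm (conv f u)} := by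
  refine ⟨∑ g ∈ f.support, |f g|, ?_⟩
  rintro c ⟨u, hu, rfl⟩
  calc l2Norm (conv f u) ≤ (∑ g ∈ f.support, |f g|) * l2Norm u := l2Norm_conv_le_sum f u
    _ ≤ (∑ g ∈ f.support, |f g|) * 1 := by
        apply mul_le_mul_of_nonneg_left hu
        exact Finset.sum_nonneg fun g _ => abs_nonneg _
    _ = _ := mul_one _

private theorem l2Norm_conv_le (f u : G →₀ ℝ) :
    l2Norm (conv f u) ≤ opNorm f * l2Norm u := by
  by_cases hu : u = 0
  · subst hu
    rw [conv_zero, l2Norm_zero, mul_zero]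
  · have hru : 0 < l2Norm u := l2Norm_pos hu
    set r := l2Norm u with hr
    have h1 : l2Norm ((r⁻¹ • u)) ≤ 1 := by
      rw [l2Norm_smul, abs_of_pos (inv_pos.mpr hru), inv_mul_cancel₀ hru.ne']
    have hmem : l2Norm (conv f (r⁻¹ • u)) ∈
        {c | ∃ v : G →₀ ℝ, l2Norm v ≤ 1 ∧ c = l2Norm (conv f v)} := ⟨_, h1, rfl⟩
    have h2 : l2Norm (conv f (r⁻¹ • u)) ≤ opNorm f := le_csSup (bddAbove_opSet f) hmem
    have h3 : conv f (r⁻¹ • u) = r⁻¹ • conv f u := by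
      simp only [conv, Finsupp.smul_sum, Finsupp.mapDomain_smul, smul_smul, mul_comm]
    rw [h3, l2Norm_smul, abs_of_pos (inv_pos.mpr hru)] at h2
    calc l2Norm (conv f u) = r * (r⁻¹ * l2Norm (conv f u)) := by field_simp
      _ ≤ r * opNorm f := mul_le_mul_of_nonneg_left h2 hru.le
      _ = opNorm f * r := mul_comm _ _

private theorem mul_apply_one (f g : MonoidAlgebra ℝ G) :
    (f * g).coeff 1 = ∑ x ∈ f.coeff.support, f.coeff x * g.coeff x⁻¹ := by
  classical
  rw [MonoidAlgebra.coeff_mul, Finsupp.sum]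
  apply Finset.sum_congr rfl
  intro a _
  rw [Finsupp.sum]
  have h : ∀ b ∈ g.coeff.support, (if a * b = 1 then f.coeff a * g.coeff b else 0)
      = if b = a⁻¹ then f.coeff a * g.coeff b else 0 := by
    intro b _
    apply if_congr _ rfl rfl
    constructor
    · exact fun h => eq_inv_of_mul_eq_one_right h
    · intro h; rw [h, mul_inv_cancel]
  rw [Finset.sum_congr rfl h, Finset.sum_ite_eq' g.coeff.support (a⁻¹) (fun b => f.coeff a * g.coeff b)]
  split_ifs with hmem
  · rfl
  · rw [Finsupp.notMem_support_iff.mp hmem, mul_zero]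

end L2Aux

/-! ### Auxiliary: the counting measures `Tfn` on the quotient group -/

theorem List.ofFn_rev' {β : Type*} {n : ℕ} (f : Fin n → β) :
    List.ofFn (fun i => f (Fin.rev i)) = (List.ofFn f).reverse := by
  apply List.ext_getElem
  · simp
  · intro i h1 h2
    simp only [List.getElem_ofFn, List.getElem_reverse, List.length_ofFn] at *
    congr 1
    ext
    simp [Fin.rev]
    omega

/-- The involution on letters. -/
private def letterInv : α × Bool → α × Bool := fun g => (g.1, !g.2)

private def wordInv {n : ℕ} (w : Fin n → α × Bool) : Fin n → α × Bool :=
  fun i => letterInv (w (Fin.rev i))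

private theorem ofFn_wordInv {n : ℕ} (w : Fin n → α × Bool) :
    List.ofFn (wordInv w) = FreeGroup.invRev (List.ofFn w) := by
  rw [FreeGroup.invRev]
  have h : List.map (fun g : α × Bool => (g.1, !g.2)) (List.ofFn w)
      = List.ofFn (fun i => letterInv (w i)) := by
    rw [List.map_ofFn]; rfl
  rw [h, ← List.ofFn_rev']
  rfl

private theorem mk_ofFn_wordInv {n : ℕ} (w : Fin n → α × Bool) :
    FreeGroup.mk (List.ofFn (wordInv w)) = (FreeGroup.mk (List.ofFn w))⁻¹ := by
  rw [ofFn_wordInv, FreeGroup.inv_mk]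

private theorem wordInv_involutive {n : ℕ} :
    Function.Involutive (wordInv (α := α) (n := n)) := by
  intro w
  funext i
  simp [wordInv, letterInv]

/-- The counting measure of `n`-step words on the quotient group. -/
private noncomputable def Tfn (N : Subgroup (FreeGroup α)) [N.Normal] (n : ℕ) :
    MonoidAlgebra ℝ (FreeGroup α ⧸ N) :=
  ∑ w : Fin n → α × Bool,
    MonoidAlgebra.single ((FreeGroup.mk (List.ofFn w) : FreeGroup α) : FreeGroup α ⧸ N) 1

/-- Number of words of length `n` lying in `N`. -/
private noncomputable def Wc (N : Subgroup (FreeGroup α)) (n : ℕ) : ℕ :=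
  Nat.card {w : Fin n → α × Bool // FreeGroup.mk (List.ofFn w) ∈ N}

section TfnFactsdev

variable (N : Subgroup (FreeGroup α)) [N.Normal]

open scoped Classical in
private theorem Tfn_apply (n : ℕ) (x : FreeGroup α ⧸ N) :
    (Tfn N n).coeff x = ∑ w : Fin n → α × Bool,
      (if ((FreeGroup.mk (List.ofFn w) : FreeGroup α) : FreeGroup α ⧸ N) = x
        then (1:ℝ) else 0) := by
  rw [Tfn, MonoidAlgebra.coeff_sum, Finsupp.finset_sum_apply]
  apply Finset.sum_congr rfl
  intro w _
  rw [MonoidAlgebra.coeff_single, Finsupp.single_apply]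

private theorem Tfn_symm (n : ℕ) (x : FreeGroup α ⧸ N) : (Tfn N n).coeff x⁻¹ = (Tfn N n).coeff x := by
  classical
  rw [Tfn_apply, Tfn_apply]
  apply Fintype.sum_equiv (wordInv_involutive).toPerm
  intro w
  simp only [Function.Involutive.coe_toPerm]
  apply if_congr _ rfl rfl
  rw [mk_ofFn_wordInv, QuotientGroup.mk_inv]
  exact inv_eq_iff_eq_inv.symm

private theorem Tfn_mul (n m : ℕ) : Tfn N n * Tfn N m = Tfn N (n + m) := by
  rw [Tfn, Tfn, Tfn, Finset.sum_mul_sum]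
  simp_rw [MonoidAlgebra.single_mul_single, one_mul]
  rw [← Finset.sum_product']
  rw [show ((Finset.univ : Finset (Fin n → α × Bool)) ×ˢ (Finset.univ : Finset (Fin m → α × Bool)))
    = Finset.univ from Finset.univ_product_univ]
  apply Fintype.sum_equiv (Fin.appendEquiv n m)
  intro p
  congr 1
  rw [show (Fin.appendEquiv n m) p = Fin.append p.1 p.2 from rfl,
    List.ofFn_fin_append, ← FreeGroup.mul_mk, QuotientGroup.mk_mul]

private theorem Tfn_one_eq (n : ℕ) : (Tfn N n).coeff 1 = (Wc N n : ℝ) := by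
  classical
  have hfil : (Finset.univ.filter fun w : Fin n → α × Bool =>
      ((FreeGroup.mk (List.ofFn w) : FreeGroup α) : FreeGroup α ⧸ N) = 1)
      = Finset.univ.filter (fun w => FreeGroup.mk (List.ofFn w) ∈ N) := by
    apply Finset.filter_congr
    intro w _
    simp [QuotientGroup.eq_one_iff]
  rw [Tfn_apply, Finset.sum_boole, hfil, Wc, Nat.card_eq_fintype_card, Fintype.card_subtype]

private theorem l2Norm_Tfn (n : ℕ) : l2Norm (Tfn N n).coeff = Real.sqrt (Wc N (2 * n)) := by
  have h2 : (Tfn N (2 * n)).coeff 1 = ∑ x ∈ (Tfn N n).coeff.support, ((Tfn N n).coeff x)^2 := by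
    rw [two_mul, ← Tfn_mul, mul_apply_one]
    apply Finset.sum_congr rfl
    intro x _
    rw [Tfn_symm, sq]
  rw [l2Norm, ← h2, Tfn_one_eq]

private theorem Tfn_support_len (n : ℕ) :
    ∀ x ∈ (Tfn N n).coeff.support, quotLength N x ≤ n := by
  classical
  intro x hx
  simp only [Tfn, MonoidAlgebra.coeff_sum, MonoidAlgebra.coeff_single] at hx
  have h := Finsupp.support_finset_sum (s := (Finset.univ : Finset (Fin n → α × Bool)))
    (f := fun w => Finsupp.single
      ((FreeGroup.mk (List.ofFn w) : FreeGroup α) : FreeGroup α ⧸ N) (1:ℝ)) hx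
  rw [Finset.mem_biUnion] at h
  obtain ⟨w, -, hw⟩ := h
  have hx' : x = ((FreeGroup.mk (List.ofFn w) : FreeGroup α) : FreeGroup α ⧸ N) := by
    have := Finsupp.support_single_subset hw
    simpa using this
  apply Nat.sInf_le
  exact ⟨List.ofFn w, List.length_ofFn (f := w), hx'.symm⟩

end TfnFactsdev

/-! ### Counting inequalities -/

private theorem Wc_mul_le (N : Subgroup (FreeGroup α)) (n m : ℕ) :
    Wc N n * Wc N m ≤ Wc N (n + m) := by
  rw [Wc, Wc, Wc, ← Nat.card_prod]
  apply Nat.card_le_card_of_injective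
    (f := fun p : {w : Fin n → α × Bool // FreeGroup.mk (List.ofFn w) ∈ N} ×
        {w : Fin m → α × Bool // FreeGroup.mk (List.ofFn w) ∈ N} =>
      (⟨Fin.append p.1.1 p.2.1, by
        rw [List.ofFn_fin_append, ← FreeGroup.mul_mk]
        exact mul_mem p.1.2 p.2.2⟩ :
        {w : Fin (n + m) → α × Bool // FreeGroup.mk (List.ofFn w) ∈ N}))
  rintro ⟨⟨w1, h1⟩, ⟨w2, h2⟩⟩ ⟨⟨v1, g1⟩, ⟨v2, g2⟩⟩ heq
  simp only [Subtype.mk.injEq] at heq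
  have h12 := (Fin.appendEquiv n m).injective (a₁ := (w1, w2)) (a₂ := (v1, v2)) heq
  rw [Prod.ext_iff] at h12
  simp only [Prod.mk.injEq, Subtype.mk.injEq]
  exact ⟨h12.1, h12.2⟩

private theorem Wc_le (N : Subgroup (FreeGroup α)) (n : ℕ) :
    Wc N n ≤ (2 * Fintype.card α) ^ n := by
  classical
  rw [Wc, Nat.card_eq_fintype_card]
  calc Fintype.card {w : Fin n → α × Bool // FreeGroup.mk (List.ofFn w) ∈ N}
      ≤ Fintype.card (Fin n → α × Bool) := Fintype.card_subtype_le _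
    _ = (2 * Fintype.card α) ^ n := by
        rw [Fintype.card_fun, Fintype.card_prod, Fintype.card_bool, Fintype.card_fin]
        ring_nf

private theorem Wc_zero (N : Subgroup (FreeGroup α)) : 1 ≤ Wc N 0 := by
  rw [Wc]
  have : Nonempty {w : Fin 0 → α × Bool // FreeGroup.mk (List.ofFn w) ∈ N} := by
    refine ⟨⟨Fin.elim0, ?_⟩⟩
    rw [List.ofFn_zero, ← FreeGroup.one_eq_mk]
    exact one_mem N
  haveI : Finite {w : Fin 0 → α × Bool // FreeGroup.mk (List.ofFn w) ∈ N} := Subtype.finite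
  exact Nat.card_pos

private theorem Wc_two (N : Subgroup (FreeGroup α)) (a : α) : 1 ≤ Wc N 2 := by
  rw [Wc]
  have : Nonempty {w : Fin 2 → α × Bool // FreeGroup.mk (List.ofFn w) ∈ N} := by
    refine ⟨⟨![(a, true), (a, false)], ?_⟩⟩
    have h : List.ofFn ![(a, true), (a, false)] = [(a, true), (a, false)] := by
      simp [List.ofFn_succ]
    rw [h]
    have h2 : FreeGroup.mk [(a, true), (a, false)]
        = FreeGroup.mk [(a, true)] * FreeGroup.mk [(a, false)] := by
      rw [FreeGroup.mul_mk]; rfl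
    have h3 : FreeGroup.mk [(a, false)] = (FreeGroup.mk [(a, true)])⁻¹ := by
      rw [FreeGroup.inv_mk]; rfl
    rw [h2, h3, mul_inv_cancel]
    exact one_mem N
  haveI : Finite {w : Fin 2 → α × Bool // FreeGroup.mk (List.ofFn w) ∈ N} := Subtype.finite
  exact Nat.card_pos

private theorem Wc_two_mul_pos (N : Subgroup (FreeGroup α)) (a : α) (n : ℕ) :
    1 ≤ Wc N (2 * n) := by
  induction n with
  | zero => exact Wc_zero N
  | succ n ih =>
    have h := Wc_mul_le N (2 * n) 2
    have : 2 * (n + 1) = 2 * n + 2 := by ring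
    rw [this]
    calc 1 = 1 * 1 := by ring
      _ ≤ Wc N (2 * n) * Wc N 2 := Nat.mul_le_mul ih (Wc_two N a)
      _ ≤ _ := h

/-! ### Return probability inequalities -/

section PFacts

variable (N : Subgroup (FreeGroup α))

private theorem wordRetProb_eq (n : ℕ) :
    wordRetProb N n = (Wc N n : ℝ) / ((2 * Fintype.card α : ℕ) : ℝ) ^ n := rfl

omit [DecidableEq α] in
private theorem wordRetProb_nonneg (n : ℕ) : 0 ≤ wordRetProb N n :=
  div_nonneg (Nat.cast_nonneg _) (pow_nonneg (Nat.cast_nonneg _) _)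

omit [DecidableEq α] in
private theorem Dcast_pos [Nonempty α] : (0:ℝ) < ((2 * Fintype.card α : ℕ) : ℝ) := by
  have h := Fintype.card_pos (α := α)
  have : 0 < 2 * Fintype.card α := by omega
  exact_mod_cast this

private theorem wordRetProb_le_one [Nonempty α] (n : ℕ) : wordRetProb N n ≤ 1 := by
  rw [wordRetProb_eq, div_le_one (pow_pos (Dcast_pos (α := α)) n)]
  calc ((Wc N n : ℕ) : ℝ) ≤ (((2 * Fintype.card α) ^ n : ℕ) : ℝ) := by
        exact_mod_cast Wc_le N n
    _ = _ := by push_cast; ring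

private theorem wordRetProb_two_mul_pos [Nonempty α] (n : ℕ) :
    0 < wordRetProb N (2 * n) := by
  rw [wordRetProb_eq]
  apply div_pos _ (pow_pos (Dcast_pos (α := α)) _)
  have h := Wc_two_mul_pos N (Classical.arbitrary α) n
  exact_mod_cast h

private theorem wordRetProb_super [Nonempty α] (n m : ℕ) :
    wordRetProb N (2*n) * wordRetProb N (2*m) ≤ wordRetProb N (2*(n+m)) := by
  rw [wordRetProb_eq, wordRetProb_eq, wordRetProb_eq, div_mul_div_comm, ← pow_add]
  have h : 2*n + 2*m = 2*(n+m) := by ring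
  rw [h]
  gcongr
  have h2 := Wc_mul_le N (2*n) (2*m)
  rw [show 2*n + 2*m = 2*(n+m) from by ring] at h2
  exact_mod_cast h2

private theorem wordRetProb_sq_le [Nonempty α] (m : ℕ) :
    wordRetProb N m ^ 2 ≤ wordRetProb N (2*m) := by
  rw [wordRetProb_eq, wordRetProb_eq, div_pow, ← pow_mul]
  have h : m * 2 = 2 * m := by ring
  rw [h]
  gcongr
  have h2 := Wc_mul_le N m m
  have h3 : m + m = 2*m := by ring
  rw [h3] at h2
  calc ((Wc N m : ℕ):ℝ)^2 = ((Wc N m * Wc N m : ℕ) : ℝ) := by push_cast; ring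
    _ ≤ _ := by exact_mod_cast h2

private theorem sqrt_wordRetProb_eq [Nonempty α] (j : ℕ) :
    Real.sqrt (wordRetProb N (2*j))
      = Real.sqrt (Wc N (2*j)) / ((2 * Fintype.card α : ℕ) : ℝ) ^ j := by
  rw [wordRetProb_eq, Real.sqrt_div (Nat.cast_nonneg _)]
  congr 1
  rw [show ((2 * Fintype.card α : ℕ) : ℝ) ^ (2*j) = (((2 * Fintype.card α : ℕ) : ℝ) ^ j)^2 by
    rw [← pow_mul]; ring_nf]
  exact Real.sqrt_sq (pow_nonneg (Nat.cast_nonneg _) _)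

private theorem sqrt_wordRetProb_ineq [Nonempty α] (P : Polynomial ℝ) [N.Normal]
    (hRD : RapidDecayWith (quotLength N) P) (n m : ℕ) :
    Real.sqrt (wordRetProb N (2*(n+m)))
      ≤ P.eval (n:ℝ) * Real.sqrt (wordRetProb N (2*n)) * Real.sqrt (wordRetProb N (2*m)) := by
  have hT := l2Norm_Tfn N
  have key : Real.sqrt (Wc N (2*(n+m)))
      ≤ P.eval (n:ℝ) * Real.sqrt (Wc N (2*n)) * Real.sqrt (Wc N (2*m)) := by
    calc Real.sqrt (Wc N (2*(n+m))) = l2Norm (Tfn N (n+m)).coeff := (hT _).symm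
      _ = l2Norm (conv (Tfn N n).coeff (Tfn N m).coeff) := by rw [conv_eq_mul, Tfn_mul]
      _ ≤ opNorm (Tfn N n).coeff * l2Norm (Tfn N m).coeff := l2Norm_conv_le _ _
      _ ≤ (P.eval (n:ℝ) * l2Norm (Tfn N n).coeff) * l2Norm (Tfn N m).coeff :=
          mul_le_mul_of_nonneg_right (hRD n (Tfn N n).coeff (Tfn_support_len N n)) (l2Norm_nonneg _)
      _ = P.eval (n:ℝ) * Real.sqrt (Wc N (2*n)) * Real.sqrt (Wc N (2*m)) := by
          rw [hT, hT]
  rw [sqrt_wordRetProb_eq, sqrt_wordRetProb_eq, sqrt_wordRetProb_eq]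
  set D := ((2 * Fintype.card α : ℕ) : ℝ) with hD
  have hDpos : (0:ℝ) < D := Dcast_pos (α := α)
  have hrhs : P.eval (n:ℝ) * (Real.sqrt (Wc N (2*n)) / D ^ n) * (Real.sqrt (Wc N (2*m)) / D ^ m)
      = (P.eval (n:ℝ) * Real.sqrt (Wc N (2*n)) * Real.sqrt (Wc N (2*m))) / D ^ (n+m) := by
    rw [pow_add]
    field_simp
  rw [hrhs, div_le_div_iff_of_pos_right (pow_pos hDpos _)]
  exact key

end PFacts

/-! ### The generic real-analysis lemma (Fekete + RD sandwich) -/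

private theorem spectral_key (p : ℕ → ℝ) (C : ℕ → ℝ)
    (hp1 : ∀ n, p n ≤ 1) (hp0 : ∀ n, 0 ≤ p n) (hpos : ∀ n, 0 < p (2*n))
    (hsuper : ∀ n m, p (2*n) * p (2*m) ≤ p (2*(n+m)))
    (hsq : ∀ m, p m ^ 2 ≤ p (2*m))
    (hC1 : ∀ n, 1 ≤ C n)
    (hCineq : ∀ n m, Real.sqrt (p (2*(n+m)))
      ≤ C n * Real.sqrt (p (2*n)) * Real.sqrt (p (2*m))) :
    Tendsto (fun n : ℕ => p (2*n) ^ (((2*n : ℕ) : ℝ))⁻¹) atTop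
        (nhds (limsup (fun n : ℕ => p n ^ ((n:ℝ)⁻¹)) atTop)) ∧
      (∀ n : ℕ, 1 ≤ n → p (2*n) ^ (((2*n : ℕ):ℝ))⁻¹
        ≤ limsup (fun n : ℕ => p n ^ ((n:ℝ)⁻¹)) atTop) ∧
      (∀ n : ℕ, 1 ≤ n → limsup (fun n : ℕ => p n ^ ((n:ℝ)⁻¹)) atTop
        ≤ C n ^ ((n:ℝ)⁻¹) * p (2*n) ^ (((2*n:ℕ):ℝ))⁻¹) := by
  set u : ℕ → ℝ := fun n => -Real.log (p (2*n)) with hu_def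
  have hulog : ∀ n, Real.log (p (2*n)) = -(u n) := by intro n; simp [hu_def]
  have husub : Subadditive u := by
    intro a b
    have h1 : p (2*a) * p (2*b) ≤ p (2*(a+b)) := hsuper a b
    have h2 : Real.log (p (2*a) * p (2*b)) ≤ Real.log (p (2*(a+b))) :=
      Real.log_le_log (mul_pos (hpos a) (hpos b)) h1
    rw [Real.log_mul (hpos a).ne' (hpos b).ne'] at h2
    simp only [hu_def]
    linarith
  have hu0 : ∀ n, 0 ≤ u n := by
    intro n
    have := Real.log_nonpos (hp0 (2*n)) (hp1 (2*n))
    simp only [hu_def]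
    linarith
  have hbdd : BddBelow (Set.range fun n : ℕ => u n / n) := by
    refine ⟨0, ?_⟩
    rintro x ⟨n, rfl⟩
    exact div_nonneg (hu0 n) (Nat.cast_nonneg n)
  have htend := husub.tendsto_lim hbdd
  set h := husub.lim with hh
  have hle : ∀ n : ℕ, n ≠ 0 → h ≤ u n / n := fun n hn => husub.lim_le_div hbdd hn
  set ρ' := Real.exp (-h/2) with hρ'
  clear_value u
  have hiden : ∀ (x : ℝ) (n : ℕ), 1 ≤ n → -x * (2*(n:ℝ))⁻¹ = -(x/(n:ℝ))/2 := by
    intro x n hn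
    rw [mul_inv]
    ring
  have hA : ∀ n : ℕ, p (2*n) ^ (((2*n : ℕ):ℝ))⁻¹ = Real.exp (-(u n) * ((2*(n:ℝ))⁻¹)) := by
    intro n
    rw [Real.rpow_def_of_pos (hpos n), hulog n]
    congr 1
    push_cast
    ring
  have htendA : Tendsto (fun n : ℕ => p (2*n) ^ (((2*n : ℕ):ℝ))⁻¹) atTop (nhds ρ') := by
    have h1 : Tendsto (fun n : ℕ => -(u n / n)/2) atTop (nhds (-h/2)) := htend.neg.div_const 2
    have h2 := (Real.continuous_exp.tendsto (-h/2)).comp h1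
    apply h2.congr'
    filter_upwards [eventually_ge_atTop 1] with n hn
    rw [Function.comp_apply, hA n, hiden (u n) n hn]
  have hAle : ∀ n : ℕ, 1 ≤ n → p (2*n) ^ (((2*n : ℕ):ℝ))⁻¹ ≤ ρ' := by
    intro n hn
    rw [hA n, hρ']
    apply Real.exp_le_exp.mpr
    have h1 : h ≤ u n / n := hle n (by omega)
    have hn0 : (0:ℝ) < (n:ℝ) := by exact_mod_cast Nat.lt_of_lt_of_le Nat.zero_lt_one hn
    rw [show -u n * (2*(n:ℝ))⁻¹ = -(u n) * (2*(n:ℝ))⁻¹ from by ring, hiden (u n) n hn]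
    linarith
  have htle : ∀ n : ℕ, 1 ≤ n → p n ^ ((n:ℝ)⁻¹) ≤ ρ' := by
    intro n hn
    have hn0 : (0:ℝ) < (n:ℝ) := by exact_mod_cast Nat.lt_of_lt_of_le Nat.zero_lt_one hn
    by_cases hpn : p n = 0
    · rw [hpn, Real.zero_rpow (inv_ne_zero hn0.ne')]
      exact (Real.exp_pos _).le
    · have hpn' : 0 < p n := lt_of_le_of_ne (hp0 n) (Ne.symm hpn)
      rw [Real.rpow_def_of_pos hpn', hρ']
      apply Real.exp_le_exp.mpr
      have h2 : 2 * Real.log (p n) ≤ Real.log (p (2*n)) := by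
        have h3 := Real.log_le_log (by positivity) (hsq n)
        rwa [Real.log_pow, Nat.cast_ofNat] at h3
      have h4 : h ≤ u n / n := hle n (by omega)
      have h5 : Real.log (p n) ≤ -(u n)/2 := by rw [hulog n] at h2; linarith
      have h6 : Real.log (p n) * (n:ℝ)⁻¹ ≤ (-(u n)/2) * (n:ℝ)⁻¹ :=
        mul_le_mul_of_nonneg_right h5 (inv_nonneg.mpr hn0.le)
      have h7 : (-(u n)/2) * (n:ℝ)⁻¹ = -(u n/n)/2 := by
        rw [show (-(u n)/2) * (n:ℝ)⁻¹ = -(u n) * (2*(n:ℝ))⁻¹ from by rw [mul_inv]; ring,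
          hiden (u n) n hn]
      linarith
  have hbound : IsBoundedUnder (· ≤ ·) atTop (fun n : ℕ => p n ^ ((n:ℝ)⁻¹)) := by
    refine ⟨1, ?_⟩
    apply Filter.eventually_map.2
    apply Filter.Eventually.of_forall
    intro n
    exact Real.rpow_le_one (hp0 n) (hp1 n) (by positivity)
  have hlimsup : limsup (fun n : ℕ => p n ^ ((n:ℝ)⁻¹)) atTop = ρ' := by
    apply le_antisymm
    · apply limsup_le_of_le
      · exact isCoboundedUnder_le_of_le atTop (fun n => Real.rpow_nonneg (hp0 n) _)
      · filter_upwards [eventually_ge_atTop 1] with n hn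
        exact htle n hn
    · have hsub : ∀ ε : ℝ, 0 < ε → ρ' - ε ≤ limsup (fun n : ℕ => p n ^ ((n:ℝ)⁻¹)) atTop := by
        intro ε hε
        have hfreq : ∃ᶠ n in atTop, ρ' - ε ≤ p n ^ ((n:ℝ)⁻¹) := by
          rw [frequently_atTop]
          intro k
          obtain ⟨K, hK1, hK2⟩ :=
            ((htendA.eventually (eventually_ge_nhds (show ρ' - ε < ρ' by linarith))).and
              (eventually_ge_atTop k)).exists
          exact ⟨2*K, by omega, hK1⟩
        exact le_limsup_of_frequently_le hfreq hbound
      by_contra hcon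
      push_neg at hcon
      have := hsub ((ρ' - limsup (fun n : ℕ => p n ^ ((n:ℝ)⁻¹)) atTop)/2) (by linarith)
      linarith
  have hupper : ∀ n : ℕ, 1 ≤ n → ρ' ≤ C n ^ ((n:ℝ)⁻¹) * p (2*n) ^ (((2*n:ℕ):ℝ))⁻¹ := by
    intro n hn
    have hn0 : (0:ℝ) < (n:ℝ) := by exact_mod_cast Nat.lt_of_lt_of_le Nat.zero_lt_one hn
    have hCpos : (0:ℝ) < C n := lt_of_lt_of_le one_pos (hC1 n)
    have hlogC : 0 ≤ Real.log (C n) := Real.log_nonneg (hC1 n)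
    have hCu : ∀ a b : ℕ, u a + u b - 2*Real.log (C a) ≤ u (a+b) := by
      intro a b
      have h1 := hCineq a b
      have hCa : (0:ℝ) < C a := lt_of_lt_of_le one_pos (hC1 a)
      have hsx : (0:ℝ) < Real.sqrt (p (2*(a+b))) := Real.sqrt_pos.mpr (hpos _)
      have h2 := Real.log_le_log hsx h1
      rw [Real.log_mul (mul_pos hCa (Real.sqrt_pos.mpr (hpos a))).ne'
          (Real.sqrt_pos.mpr (hpos b)).ne',
        Real.log_mul hCa.ne' (Real.sqrt_pos.mpr (hpos a)).ne',
        Real.log_sqrt (hp0 _), Real.log_sqrt (hp0 _), Real.log_sqrt (hp0 _)] at h2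
      rw [hulog, hulog, hulog] at h2
      linarith
    have hind : ∀ k : ℕ, ((k:ℝ)+1) * u n - 2*(k:ℝ)*Real.log (C n) ≤ u ((k+1)*n) := by
      intro k
      induction k with
      | zero => simp
      | succ k ih =>
        have h1 := hCu n ((k+1)*n)
        have h2 : n + (k+1)*n = (k+1+1)*n := by ring
        rw [h2] at h1
        push_cast
        push_cast at ih
        linarith
    have hmono : Tendsto (fun k : ℕ => (k+1)*n) atTop atTop := by
      apply tendsto_atTop_mono (f := fun k : ℕ => k)
      · intro k
        calc k ≤ k + 1 := Nat.le_succ k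
          _ ≤ (k+1)*n := Nat.le_mul_of_pos_right _ (by omega)
      · exact tendsto_id
    have htendk : Tendsto (fun k : ℕ => u ((k+1)*n) / (((k+1)*n : ℕ):ℝ)) atTop (nhds h) :=
      htend.comp hmono
    have hklb : ∀ k : ℕ, u n / n - 2*Real.log (C n)/n ≤ u ((k+1)*n) / (((k+1)*n : ℕ):ℝ) := by
      intro k
      have hc : (((k+1)*n : ℕ):ℝ) = ((k:ℝ)+1)*(n:ℝ) := by push_cast; ring
      rw [hc]
      have h1 := hind k
      have hk0 : (0:ℝ) ≤ (k:ℝ) := Nat.cast_nonneg k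
      rw [div_sub_div_same, div_le_div_iff₀ hn0 (by positivity)]
      have hu1 := hu0 ((k+1)*n)
      nlinarith [h1, hlogC, hn0, hk0]
    have hfinal : u n / n - 2*Real.log (C n)/n ≤ h := ge_of_tendsto' htendk hklb
    rw [hρ', Real.rpow_def_of_pos hCpos, Real.rpow_def_of_pos (hpos n), ← Real.exp_add]
    apply Real.exp_le_exp.mpr
    rw [hulog n]
    have e2 : ((2*n : ℕ):ℝ)⁻¹ = (2*(n:ℝ))⁻¹ := by push_cast; ring
    rw [e2]
    have h9 : Real.log (C n) * (n:ℝ)⁻¹ = 2*Real.log (C n)/n/2 := by ring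
    rw [h9, show -u n * (2*(n:ℝ))⁻¹ = -(u n) * (2*(n:ℝ))⁻¹ from by ring, hiden (u n) n hn]
    linarith
  exact ⟨hlimsup ▸ htendA, fun n hn => hlimsup ▸ hAle n hn, fun n hn => hlimsup ▸ hupper n hn⟩

/-! ### `P(n)^(1/n) → 1` for a polynomial bounded below by 1 -/

private theorem poly_rpow_tendsto_one (P : Polynomial ℝ) (hP1 : ∀ n : ℕ, 1 ≤ P.eval (n:ℝ)) :
    Tendsto (fun n : ℕ => (P.eval (n:ℝ)) ^ ((n:ℝ)⁻¹)) atTop (nhds 1) := by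
  set d := P.natDegree with hd
  -- eventually P.eval n ≤ n ^ (d+1)
  have hdeg : P.degree < (Polynomial.X ^ (d+1) : Polynomial ℝ).degree := by
    rw [Polynomial.degree_X_pow]
    calc P.degree ≤ (d : WithBot ℕ) := Polynomial.degree_le_natDegree
      _ < ((d+1 : ℕ) : WithBot ℕ) := by exact_mod_cast lt_add_one d
  have htz := Polynomial.div_tendsto_zero_of_degree_lt P (Polynomial.X ^ (d+1)) hdeg
  have hev : ∀ᶠ x : ℝ in atTop, P.eval x / x ^ (d+1) < 1 := by
    have h2 := htz.eventually (eventually_lt_nhds one_pos)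
    simpa [Polynomial.eval_pow] using h2
  have hevn : ∀ᶠ n : ℕ in atTop, P.eval (n:ℝ) ≤ (n:ℝ) ^ (d+1) := by
    have h3 := tendsto_natCast_atTop_atTop (R := ℝ).eventually hev
    filter_upwards [h3, eventually_ge_atTop 1] with n hn hn1
    have hnpos : (0:ℝ) < (n:ℝ) ^ (d+1) := by
      have : (0:ℝ) < (n:ℝ) := by exact_mod_cast Nat.lt_of_lt_of_le Nat.zero_lt_one hn1
      positivity
    have := (div_lt_one hnpos).mp hn
    linarith
  -- the dominating sequence tends to 1
  have hlog : Tendsto (fun n : ℕ => ((d:ℝ)+1) * ((n:ℝ)⁻¹ * Real.log (n:ℝ))) atTop (nhds 0) := by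
    have h1 : Tendsto (fun x : ℝ => Real.log x / x) atTop (nhds 0) :=
      Real.isLittleO_log_id_atTop.tendsto_div_nhds_zero
    have h2 := (h1.comp (tendsto_natCast_atTop_atTop (R := ℝ))).const_mul ((d:ℝ)+1)
    rw [mul_zero] at h2
    apply h2.congr
    intro n
    rw [Function.comp_apply, div_eq_mul_inv]
    ring
  have hupper : Tendsto (fun n : ℕ => ((n:ℝ) ^ (d+1)) ^ ((n:ℝ)⁻¹)) atTop (nhds 1) := by
    have h2 := (Real.continuous_exp.tendsto 0).comp hlog
    rw [Real.exp_zero] at h2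
    apply h2.congr'
    filter_upwards [eventually_ge_atTop 1] with n hn
    have hnpos : (0:ℝ) < (n:ℝ) := by exact_mod_cast Nat.lt_of_lt_of_le Nat.zero_lt_one hn
    rw [Function.comp_apply, Real.rpow_def_of_pos (by positivity), Real.log_pow]
    congr 1
    push_cast
    ring
  -- squeeze
  have hlow : ∀ᶠ n : ℕ in atTop, (1:ℝ) ≤ (P.eval (n:ℝ)) ^ ((n:ℝ)⁻¹) := by
    apply Filter.Eventually.of_forall
    intro n
    have hP : (0:ℝ) < P.eval (n:ℝ) := lt_of_lt_of_le one_pos (hP1 n)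
    rw [Real.rpow_def_of_pos hP]
    rw [show (1:ℝ) = Real.exp 0 from (Real.exp_zero).symm]
    apply Real.exp_le_exp.mpr
    exact mul_nonneg (Real.log_nonneg (hP1 n)) (by positivity)
  have hupp : ∀ᶠ n : ℕ in atTop, (P.eval (n:ℝ)) ^ ((n:ℝ)⁻¹) ≤ ((n:ℝ) ^ (d+1)) ^ ((n:ℝ)⁻¹) := by
    filter_upwards [hevn] with n hn
    apply Real.rpow_le_rpow (le_trans zero_le_one (hP1 n)) hn (by positivity)
  exact tendsto_of_tendsto_of_tendsto_of_le_of_le' tendsto_const_nhds hupper hlow hupp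

/-! ### Degenerate case: empty alphabet -/

private theorem wordSpectralRadius_of_isEmpty [IsEmpty α] (N : Subgroup (FreeGroup α)) :
    wordSpectralRadius N = 0 := by
  rw [wordSpectralRadius]
  have hev : ∀ᶠ n : ℕ in atTop,
      wordRetProb N n ^ ((n:ℝ)⁻¹) = (fun _ : ℕ => (0:ℝ)) n := by
    filter_upwards [eventually_ge_atTop 1] with n hn
    have hp : wordRetProb N n = 0 := by
      rw [wordRetProb]
      have hemp : IsEmpty {w : Fin n → α × Bool // FreeGroup.mk (List.ofFn w) ∈ N} := by
        constructor
        rintro ⟨w, -⟩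
        exact (IsEmpty.false (w ⟨0, by omega⟩).1)
      rw [Nat.card_of_isEmpty]
      simp
    rw [hp, Real.zero_rpow (inv_ne_zero (Nat.cast_ne_zero.mpr (by omega)))]
  rw [limsup_congr hev]
  exact limsup_const 0

/-- If marked groups `(G_i,S) = F(α)/N_i` all satisfy Rapid Decay with a common
polynomial `P` and converge to `(G,S) = F(α)/M` in the space of marked groups (balls
of any radius in the Cayley graphs eventually agree), then `ρ(G_i,S) → ρ(G,S)`. -/
theorem spectralRadius_continuous_of_uniform_RD
    (N : ℕ → Subgroup (FreeGroup α)) (M : Subgroup (FreeGroup α))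
    (hN : ∀ i, (N i).Normal) (hM : M.Normal)
    (P : Polynomial ℝ)
    (hRD : ∀ i, RapidDecayWith (quotLength (N i)) P)
    (hconv : ∀ R : ℕ, ∃ i₀ : ℕ, ∀ i ≥ i₀, ∀ w : List (α × Bool), w.length ≤ R →
      (FreeGroup.mk w ∈ N i ↔ FreeGroup.mk w ∈ M)) :
    Tendsto (fun i => wordSpectralRadius (N i)) atTop
      (nhds (wordSpectralRadius M)) := by
  by_cases hα : IsEmpty α
  · have h0 : ∀ K : Subgroup (FreeGroup α), wordSpectralRadius K = 0 :=
      fun K => wordSpectralRadius_of_isEmpty K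
    simp only [h0]
    exact tendsto_const_nhds
  haveI : Nonempty α := not_isEmpty_iff.mp hα
  -- transfer of return probabilities
  have hret : ∀ R : ℕ, ∃ i₀ : ℕ, ∀ i ≥ i₀, ∀ m ≤ R, wordRetProb (N i) m = wordRetProb M m := by
    intro R
    obtain ⟨i₀, h⟩ := hconv R
    refine ⟨i₀, fun i hi m hm => ?_⟩
    rw [wordRetProb, wordRetProb]
    congr 2
    apply Nat.card_congr
    apply Equiv.subtypeEquivRight
    intro w
    exact h i hi (List.ofFn w) (by rw [List.length_ofFn]; exact hm)
  -- the RD square-root inequality for each `N i`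
  have hineq : ∀ i n m, Real.sqrt (wordRetProb (N i) (2*(n+m)))
      ≤ P.eval (n:ℝ) * Real.sqrt (wordRetProb (N i) (2*n))
        * Real.sqrt (wordRetProb (N i) (2*m)) := by
    intro i n m
    haveI := hN i
    exact sqrt_wordRetProb_ineq (N i) P (hRD i) n m
  -- `P.eval n ≥ 1`
  have hC1 : ∀ n : ℕ, 1 ≤ P.eval (n:ℝ) := by
    intro n
    have h1 := hineq 0 n n
    have hpos := wordRetProb_two_mul_pos (N 0) n
    have h2 := wordRetProb_super (N 0) n n
    have h3 : wordRetProb (N 0) (2*n) ≤ Real.sqrt (wordRetProb (N 0) (2*(n+n))) := by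
      rw [show wordRetProb (N 0) (2*n)
          = Real.sqrt (wordRetProb (N 0) (2*n) * wordRetProb (N 0) (2*n)) from
        (Real.sqrt_mul_self hpos.le).symm]
      exact Real.sqrt_le_sqrt h2
    have h4 : Real.sqrt (wordRetProb (N 0) (2*n)) * Real.sqrt (wordRetProb (N 0) (2*n))
        = wordRetProb (N 0) (2*n) := Real.mul_self_sqrt hpos.le
    rw [mul_assoc, h4] at h1
    exact (le_mul_iff_one_le_left hpos).mp (h3.trans h1)
  -- the RD square-root inequality for `M`, by transfer
  have hMineq : ∀ n m, Real.sqrt (wordRetProb M (2*(n+m)))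
      ≤ P.eval (n:ℝ) * Real.sqrt (wordRetProb M (2*n)) * Real.sqrt (wordRetProb M (2*m)) := by
    intro n m
    obtain ⟨i₀, h⟩ := hret (2*(n+m))
    have e1 : wordRetProb (N i₀) (2*(n+m)) = wordRetProb M (2*(n+m)) := h i₀ le_rfl _ le_rfl
    have e2 : wordRetProb (N i₀) (2*n) = wordRetProb M (2*n) := h i₀ le_rfl _ (by omega)
    have e3 : wordRetProb (N i₀) (2*m) = wordRetProb M (2*m) := h i₀ le_rfl _ (by omega)
    have h1 := hineq i₀ n m
    rwa [e1, e2, e3] at h1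
  -- spectral key for `M`
  obtain ⟨htendM, hlbM, -⟩ := spectral_key (wordRetProb M) (fun n => P.eval (n:ℝ))
    (wordRetProb_le_one M) (wordRetProb_nonneg M) (wordRetProb_two_mul_pos M)
    (wordRetProb_super M) (wordRetProb_sq_le M) hC1 hMineq
  have hρM : wordSpectralRadius M = limsup (fun n : ℕ => wordRetProb M n ^ ((n:ℝ)⁻¹)) atTop := rfl
  rw [← hρM] at htendM hlbM
  -- spectral key for each `N i`
  have hkey : ∀ i,
      (∀ n : ℕ, 1 ≤ n → wordRetProb (N i) (2*n) ^ (((2*n : ℕ):ℝ))⁻¹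
        ≤ wordSpectralRadius (N i)) ∧
      (∀ n : ℕ, 1 ≤ n → wordSpectralRadius (N i)
        ≤ P.eval (n:ℝ) ^ ((n:ℝ)⁻¹) * wordRetProb (N i) (2*n) ^ (((2*n:ℕ):ℝ))⁻¹) := by
    intro i
    obtain ⟨-, hlb, hub⟩ := spectral_key (wordRetProb (N i)) (fun n => P.eval (n:ℝ))
      (wordRetProb_le_one (N i)) (wordRetProb_nonneg (N i)) (wordRetProb_two_mul_pos (N i))
      (wordRetProb_super (N i)) (wordRetProb_sq_le (N i)) hC1 (hineq i)
    exact ⟨hlb, hub⟩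
  -- combined upper bound sequence tends to ρ(M)
  have hprod : Tendsto (fun n : ℕ => P.eval (n:ℝ) ^ ((n:ℝ)⁻¹)
      * wordRetProb M (2*n) ^ (((2*n:ℕ):ℝ))⁻¹) atTop (nhds (wordSpectralRadius M)) := by
    have h1 := (poly_rpow_tendsto_one P hC1).mul htendM
    rwa [one_mul] at h1
  rw [Metric.tendsto_atTop]
  intro ε hε
  have hev1 := htendM.eventually
    (eventually_gt_nhds (show wordSpectralRadius M - ε < wordSpectralRadius M by linarith))
  have hev2 := hprod.eventually
    (eventually_lt_nhds (show wordSpectralRadius M < wordSpectralRadius M + ε by linarith))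
  obtain ⟨n₀, hn₀1, hn₀2, hn₀3⟩ := (hev1.and (hev2.and (eventually_ge_atTop 1))).exists
  obtain ⟨i₀, hi₀⟩ := hret (2*n₀)
  refine ⟨i₀, fun i hi => ?_⟩
  have heqq : wordRetProb (N i) (2*n₀) = wordRetProb M (2*n₀) := hi₀ i hi _ le_rfl
  obtain ⟨hlbi, hubi⟩ := hkey i
  have low : wordSpectralRadius M - ε < wordSpectralRadius (N i) := by
    have h1 := hlbi n₀ hn₀3
    rw [heqq] at h1
    linarith
  have high : wordSpectralRadius (N i) < wordSpectralRadius M + ε := by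
    have h1 := hubi n₀ hn₀3
    rw [heqq] at h1
    calc wordSpectralRadius (N i)
        ≤ P.eval (n₀:ℝ) ^ ((n₀:ℝ)⁻¹) * wordRetProb M (2*n₀) ^ (((2*n₀:ℕ):ℝ))⁻¹ := h1
      _ < wordSpectralRadius M + ε := hn₀2
  rw [Real.dist_eq, abs_sub_lt_iff]
  constructor <;> linarith
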